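/- arXiv:2503.14658 — 2 statements merged into one kernel-verified Lean document; each statement's English description precedes it below -/
import Mathlib

section
/- Let Z and W be Polish spaces, (z_t)_t a Markov process on Z and (z_t,w_t)_t a Markov process on Z×W whose projection onto Z is (z_t)_t. Assume the Markov semigroup of (z_t,w_t)_t is strong Feller on Z×W. Let ν be an ergodic invariant measure for (z_t)_t, and let μ be a Borel probability measure on W with connected support such that the product measure ν ⊗ μ is invariant for (z_t,w_t)_t. Then ν ⊗ μ is an ergodic measure for (z_t,w_t)_t. -/
/-!
Let `E` be a set with `Q_t 1_E = 1_E` a.e. By the strong Feller property `f = Q_1 1_E` is a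
continuous version of `1_E`, so `f` takes only the values `0` and `1` on the support of `ν ⊗ μ`,
which contains `supp ν × supp μ`. For `z ∈ supp ν` the map `w ↦ f (z, w)` is therefore constant
on the connected set `supp μ`, and `E` agrees a.e. with a cylinder `F × W`. Because the
`Z`-marginal of `Q_t` is `P_t` and `ν ⊗ μ` is `Q`-invariant, `F` is `P`-invariant modulo `ν`,
so ergodicity of `ν` gives `(ν ⊗ μ) E = ν F ∈ {0, 1}`.
-/

open MeasureTheory ProbabilityTheory
open scoped ENNReal

/-- Strong Feller property of a Markov semigroup indexed by `t > 0`. -/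
def IsStrongFeller4 {X : Type*} [MeasurableSpace X] [TopologicalSpace X]
    (P : ℝ → Kernel X X) : Prop :=
  ∀ t : ℝ, 0 < t → ∀ φ : X → ℝ, Measurable φ → (∃ C, ∀ x, |φ x| ≤ C) →
    Continuous fun x => ∫ y, φ y ∂(P t x)

/-- Invariance of a measure under a Markov semigroup. -/
def IsInvariant4 {X : Type*} [MeasurableSpace X] (P : ℝ → Kernel X X)
    (m : Measure X) : Prop :=
  ∀ t : ℝ, 0 < t → m.bind (P t) = m

/-- Ergodicity of an invariant measure: any set `E` with `P_t 1_E = 1_E` `m`-a.e. for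
all `t > 0` has measure `0` or `1`. -/
def IsErgodic4 {X : Type*} [MeasurableSpace X] (P : ℝ → Kernel X X)
    (m : Measure X) : Prop :=
  IsInvariant4 P m ∧
    ∀ E : Set X, MeasurableSet E →
      (∀ t : ℝ, 0 < t → ∀ᵐ x ∂m, P t x E = E.indicator (fun _ => (1 : ℝ≥0∞)) x) →
      m E = 0 ∨ m E = 1

/-- Topological support of a measure. -/
def measSupp4 {X : Type*} [MeasurableSpace X] [TopologicalSpace X] (m : Measure X) :
    Set X :=
  {x | ∀ U : Set X, IsOpen U → x ∈ U → 0 < m U}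


namespace MeasureTheory.Measure

variable {X Y : Type*} [MeasurableSpace X] [MeasurableSpace Y]

lemma measSupp4_eq_support [TopologicalSpace X] (m : Measure X) : measSupp4 m = m.support := by
  simp only [measSupp4, support_eq_forall_isOpen]
  grind

lemma support_prod_subset [TopologicalSpace X] [TopologicalSpace Y] (μ : Measure X)
    (ν : Measure Y) [SFinite ν] : μ.support ×ˢ ν.support ⊆ (μ.prod ν).support := by
  rintro ⟨x, y⟩ ⟨hx, hy⟩
  rw [mem_support_iff_forall] at hx hy ⊢
  intro U hU
  rw [nhds_prod_eq, Filter.mem_prod_iff] at hU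
  obtain ⟨u, hu, v, hv, huv⟩ := hU
  calc 0 < μ u * ν v := ENNReal.mul_pos (hx u hu).ne' (hy v hv).ne'
    _ = μ.prod ν (u ×ˢ v) := (prod_prod u v).symm
    _ ≤ μ.prod ν U := measure_mono huv

lemma ae_kernel_apply_eq_zero_of_bind {m : Measure X} {κ : Kernel X Y} {s : Set Y}
    (hs : m.bind κ s = 0) : ∀ᵐ x ∂m, κ x s = 0 := by
  rw [← measure_toMeasurable s, bind_apply (measurableSet_toMeasurable _ _)
    κ.aemeasurable, lintegral_eq_zero_iff (κ.measurable_coe (measurableSet_toMeasurable _ _))]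
    at hs
  filter_upwards [hs] with x hx
  exact measure_mono_null (subset_toMeasurable _ _) hx

lemma ae_kernel_apply_congr_of_bind_eq {m : Measure X} {κ : Kernel X X} (hκ : m.bind κ = m)
    {s s' : Set X} (h : s =ᵐ[m] s') : ∀ᵐ x ∂m, κ x s = κ x s' := by
  rw [ae_eq_set] at h
  filter_upwards [ae_kernel_apply_eq_zero_of_bind (hκ ▸ h.1),
    ae_kernel_apply_eq_zero_of_bind (hκ ▸ h.2)] with x h₁ h₂
  exact measure_congr (ae_eq_set.2 ⟨h₁, h₂⟩)

end MeasureTheory.Measure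

def IsAEInvariantSet {X : Type*} [MeasurableSpace X] (P : ℝ → Kernel X X) (m : Measure X)
    (E : Set X) : Prop :=
  ∀ t : ℝ, 0 < t → ∀ᵐ x ∂m, P t x E = E.indicator (fun _ => (1 : ℝ≥0∞)) x

namespace IsAEInvariantSet

variable {X Y : Type*} [MeasurableSpace X] [MeasurableSpace Y]

lemma congr {P : ℝ → Kernel X X} {m : Measure X} {E E' : Set X} (hm : IsInvariant4 P m)
    (hE : IsAEInvariantSet P m E) (h : E =ᵐ[m] E') : IsAEInvariantSet P m E' := by
  intro t ht
  filter_upwards [hE t ht, Measure.ae_kernel_apply_congr_of_bind_eq (hm t ht) h,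
    indicator_ae_eq_of_ae_eq_set (f := fun _ => (1 : ℝ≥0∞)) h] with x hx hPx h1x
  rw [← hPx, hx, h1x]

lemma of_prod_univ {P : ℝ → Kernel X X} {Q : ℝ → Kernel (X × Y) (X × Y)}
    (hproj : ∀ t : ℝ, 0 < t → ∀ p : X × Y, (Q t p).map Prod.fst = P t p.1)
    {ν : Measure X} {μ : Measure Y} [SFinite μ] [NeZero μ] {F : Set X} (hF : MeasurableSet F)
    (h : IsAEInvariantSet Q (ν.prod μ) (F ×ˢ Set.univ)) : IsAEInvariantSet P ν F := by
  intro t ht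
  filter_upwards [Measure.ae_ae_of_ae_prod (h t ht)] with x hx
  obtain ⟨y, hy⟩ := hx.exists
  rw [← hproj t ht (x, y), Measure.map_apply measurable_fst hF, ← Set.prod_univ, hy]
  by_cases hx : x ∈ F <;> simp [hx]

lemma measureReal_ae_eq_indicator {P : ℝ → Kernel X X} {m : Measure X} {E : Set X}
    (hE : IsAEInvariantSet P m E) {t : ℝ} (ht : 0 < t) :
    (fun x => (P t x).real E) =ᵐ[m] E.indicator 1 := by
  filter_upwards [hE t ht] with x hx
  by_cases hxE : x ∈ E <;> simp [measureReal_def, hx, hxE]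

end IsAEInvariantSet

lemma IsStrongFeller4.continuous_measureReal {X : Type*} [MeasurableSpace X] [TopologicalSpace X]
    {P : ℝ → Kernel X X} (hP : IsStrongFeller4 P) {t : ℝ} (ht : 0 < t) {E : Set X}
    (hE : MeasurableSet E) : Continuous fun x => (P t x).real E := by
  simp_rw [← integral_indicator_one hE]
  refine hP t ht _ (measurable_one.indicator hE) ⟨1, fun x => ?_⟩
  by_cases hx : x ∈ E <;> simp [hx]

section Topology

variable {X Y : Type*} [MeasurableSpace X] [TopologicalSpace X]
  [MeasurableSpace Y] [TopologicalSpace Y]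

lemma mem_zero_one_of_mem_support_of_ae_eq_indicator {m : Measure X} {f : X → ℝ}
    (hf : Continuous f) {E : Set X} (hfE : f =ᵐ[m] E.indicator 1) {x : X}
    (hx : x ∈ m.support) : f x ∈ ({0, 1} : Set ℝ) := by
  have hclosed : IsClosed (f ⁻¹' {0, 1}) :=
    ((Set.finite_singleton (1 : ℝ)).insert 0).isClosed.preimage hf
  refine Measure.support_subset_of_isClosed hclosed ?_ hx
  filter_upwards [hfE] with y hy
  by_cases hyE : y ∈ E <;> simp [hy, hyE]

lemma exists_ae_eq_prod_univ_of_continuous [OpensMeasurableSpace X]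
    [HereditarilyLindelofSpace X] [HereditarilyLindelofSpace Y]
    {ν : Measure X} {μ : Measure Y} [SFinite μ] (hμ : IsConnected μ.support)
    {f : X × Y → ℝ} (hf : Continuous f) {E : Set (X × Y)}
    (hfE : f =ᵐ[ν.prod μ] E.indicator 1) :
    ∃ F : Set X, MeasurableSet F ∧ E =ᵐ[ν.prod μ] F ×ˢ (Set.univ : Set Y) := by
  obtain ⟨y₀, hy₀⟩ := hμ.nonempty
  have hfiber : ∀ x ∈ ν.support, ∀ y ∈ μ.support, f (x, y) = f (x, y₀) := by
    intro x hx y hy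
    refine hμ.isPreconnected.constant_of_mapsTo (Set.toFinite {0, 1}).isDiscrete
      (hf.comp (Continuous.prodMk_right x)).continuousOn (fun y hy => ?_) hy hy₀
    exact mem_zero_one_of_mem_support_of_ae_eq_indicator hf hfE
      (Measure.support_prod_subset ν μ ⟨hx, hy⟩)
  refine ⟨{x | f (x, y₀) = 1},
    measurableSet_eq_fun (hf.comp (Continuous.prodMk_left y₀)).measurable measurable_const, ?_⟩
  filter_upwards [hfE, Measure.quasiMeasurePreserving_fst.ae Measure.support_mem_ae,
    Measure.quasiMeasurePreserving_snd.ae Measure.support_mem_ae] with p hp hp₁ hp₂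
  change (p ∈ E) = (f (p.1, y₀) = 1 ∧ p.2 ∈ Set.univ)
  rw [← hfiber _ hp₁ _ hp₂, hp]
  by_cases hpE : p ∈ E <;> simp [hpE]

end Topology

theorem stmt4_general {Z W : Type*}
    [MeasurableSpace Z] [TopologicalSpace Z] [PolishSpace Z] [BorelSpace Z]
    [MeasurableSpace W] [TopologicalSpace W] [PolishSpace W]
    (P : ℝ → Kernel Z Z) (Q : ℝ → Kernel (Z × W) (Z × W))
    (hproj : ∀ t : ℝ, 0 < t → ∀ p : Z × W, (Q t p).map Prod.fst = P t p.1)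
    (hFeller : IsStrongFeller4 Q)
    (ν : Measure Z) (hν : IsErgodic4 P ν)
    (μ : Measure W) [IsProbabilityMeasure μ] (hconn : IsConnected (measSupp4 μ))
    (hprodinv : IsInvariant4 Q (ν.prod μ)) :
    IsErgodic4 Q (ν.prod μ) := by
  refine ⟨hprodinv, fun E hE hEinv => ?_⟩
  rw [Measure.measSupp4_eq_support] at hconn
  obtain ⟨F, hF, hEF⟩ := exists_ae_eq_prod_univ_of_continuous hconn
    (hFeller.continuous_measureReal one_pos hE)
    (IsAEInvariantSet.measureReal_ae_eq_indicator hEinv one_pos)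
  have hFinv : IsAEInvariantSet P ν F :=
    (IsAEInvariantSet.congr hprodinv hEinv hEF).of_prod_univ hproj hF
  rw [measure_congr hEF, Measure.prod_prod, measure_univ, mul_one]
  exact hν.2 F hF hFinv

/-- Let `Z, W` be Polish spaces, `P` the Markov semigroup of a process
on `Z` and `Q` the Markov semigroup of a process on `Z × W` projecting onto the first.
If `Q` is strong Feller, `ν` is an ergodic measure for `P`, and `μ` is a measure on `W`
with connected support such that `ν ⊗ μ` is invariant for `Q`, then `ν ⊗ μ` is ergodic
for `Q`. -/
theorem stmt4 {Z W : Type*}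
    [MeasurableSpace Z] [TopologicalSpace Z] [PolishSpace Z] [BorelSpace Z]
    [MeasurableSpace W] [TopologicalSpace W] [PolishSpace W] [BorelSpace W]
    (P : ℝ → Kernel Z Z) (Q : ℝ → Kernel (Z × W) (Z × W))
    (hP : ∀ t, IsMarkovKernel (P t)) (hQ : ∀ t, IsMarkovKernel (Q t))
    (hproj : ∀ t : ℝ, 0 < t → ∀ p : Z × W, (Q t p).map Prod.fst = P t p.1)
    (hFeller : IsStrongFeller4 Q)
    (ν : Measure Z) [IsProbabilityMeasure ν] (hν : IsErgodic4 P ν)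
    (μ : Measure W) [IsProbabilityMeasure μ] (hconn : IsConnected (measSupp4 μ))
    (hprodinv : IsInvariant4 Q (ν.prod μ)) :
    IsErgodic4 Q (ν.prod μ) :=
  stmt4_general P Q hproj hFeller ν hν μ hconn hprodinv
end

section
/- Let 𝒵_L be the set of pairs (k,ℓ) with k ∈ ℤ³ \ {0}, |k|_∞ = 1, ℓ ∈ {1,2} (with only ℓ = 1 allowed when k_z = 0), and for z ∈ (0,1) define φ_{(k,ℓ)}(z) = γ^{(u)}_{(k,ℓ)} − β^{(u)}_{(k,ℓ)} cos(2π k_z z) ∈ ℝ³, where γ^{(u)}_{(k,ℓ)} = (γ_{(k,ℓ)}, γ^{(w)}_{(k,ℓ)}), β^{(u)}_{(k,ℓ)} = (0,0,γ^{(w)}_{(k,ℓ)}), γ^{(w)}_{(k,ℓ)} = −k_z^{-1}(k_x,k_y)·a_ℓ for k_z ≠ 0 and 0 otherwise, and γ_{(k,ℓ)} = a_ℓ for k_z ≠ 0. Then for all h ∈ ℝ³ and z ∈ (0,1): max_{(k,ℓ)∈𝒵_L} |⟨φ_{(k,ℓ)}(z), h⟩| ≳ (z² ∧ (1−z)²)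 |h|, with an implicit constant independent of z and h. -/
open Matrix Real

/-- The sign `sign(k) ∈ {±1}` attached to a partition `ℤ³₀ = ℤ³₊ ∪ ℤ³₋` (here the
lexicographic choice), with `sign(−k) = −sign(k)`. -/
noncomputable def sgn13 (k : Fin 3 → ℤ) : ℝ :=
  if 0 < k 0 ∨ (k 0 = 0 ∧ (0 < k 1 ∨ (k 1 = 0 ∧ 0 < k 2))) then 1 else -1

/-- The horizontal part `γ_{(k,ℓ)}`: `a_ℓ` for `k_z ≠ 0`, and `sign(k) k^⊥ / |k|` for
`k_z = 0` (indices `ℓ = 0, 1` correspond to `ℓ = 1, 2`). -/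
noncomputable def gammaH13 (k : Fin 3 → ℤ) (ℓ : Fin 2) : Fin 2 → ℝ :=
  if k 2 = 0 then
    (sgn13 k / Real.sqrt (((k 0 : ℝ)) ^ 2 + ((k 1 : ℝ)) ^ 2)) • ![(k 1 : ℝ), -(k 0 : ℝ)]
  else if ℓ = 0 then ![1, 0] else ![0, 1]

/-- The vertical coefficient `γ^{(w)}_{(k,ℓ)} = −k_z⁻¹ (k_x,k_y)·a_ℓ` for `k_z ≠ 0`,
and `0` otherwise. -/
noncomputable def gammaW13 (k : Fin 3 → ℤ) (ℓ : Fin 2) : ℝ :=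
  if k 2 = 0 then 0
  else -((k 0 : ℝ) * (if ℓ = 0 then 1 else 0) + (k 1 : ℝ) * (if ℓ = 0 then 0 else 1)) /
    (k 2 : ℝ)

/-- `φ_{(k,ℓ)}(z) = γ^{(u)}_{(k,ℓ)} − β^{(u)}_{(k,ℓ)} cos(2π k_z z)`, where
`γ^{(u)} = (γ_{(k,ℓ)}, γ^{(w)})` and `β^{(u)} = (0,0,γ^{(w)})`. -/
noncomputable def phi13 (k : Fin 3 → ℤ) (ℓ : Fin 2) (z : ℝ) : Fin 3 → ℝ :=
  ![gammaH13 k ℓ 0, gammaH13 k ℓ 1,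
    gammaW13 k ℓ * (1 - Real.cos (2 * Real.pi * (k 2 : ℝ) * z))]

/-- The low-mode index set `𝒵_L`: pairs `(k,ℓ)` with `k ∈ ℤ³ \ {0}`, `|k|_∞ = 1`,
`ℓ ∈ {0,1}`, and only `ℓ = 0` allowed when `k_z = 0`. -/
def ZL13 : Set ((Fin 3 → ℤ) × Fin 2) :=
  {p | p.1 ≠ 0 ∧ (∀ i, |p.1 i| ≤ 1) ∧ (p.1 2 = 0 → p.2 = 0)}

/-!
Among the low modes, `((0,1,1), ℓ = 1)` and `((1,0,1), ℓ = 2)` have `γ^{(w)} = 0`, so their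
`φ` are the constant vectors `e₁` and `e₂`, while `((1,0,1), ℓ = 1)` gives
`e₁ − (1 − cos 2πz) e₃`. Testing `h` against these three vectors recovers `h₁`, `h₂` and
`(1 − cos 2πz) h₃` up to a factor 2, and `1 − cos 2πz = 2 sin² πz ≥ 8 (z ∧ (1 − z))²` by
Jordan's inequality `sin x ≥ 2x/π` on `[0, π/2]`.
-/

lemma two_mul_min_le_sin_pi_mul {z : ℝ} (hz₀ : 0 ≤ z) (hz₁ : z ≤ 1) :
    2 * min z (1 - z) ≤ sin (π * z) := by
  have jordan : ∀ x : ℝ, 0 ≤ x → x ≤ 1 / 2 → 2 * x ≤ sin (π * x) := fun x hx₀ hx₁ => by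
    have := mul_le_sin (x := π * x) (by positivity) (by nlinarith [pi_pos])
    rwa [← mul_assoc, div_mul_cancel₀ _ pi_ne_zero] at this
  rcases le_total z (1 - z) with h | h
  · rw [min_eq_left h]
    exact jordan z hz₀ (by linarith)
  · rw [min_eq_right h, ← sin_pi_sub, ← mul_one_sub]
    exact jordan (1 - z) (by linarith) (by linarith)

lemma eight_mul_min_sq_le_one_sub_cos {z : ℝ} (hz₀ : 0 ≤ z) (hz₁ : z ≤ 1) :
    8 * min (z ^ 2) ((1 - z) ^ 2) ≤ 1 - cos (2 * π * z) := by
  have hmin : min (z ^ 2) ((1 - z) ^ 2) ≤ min z (1 - z) ^ 2 := by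
    rcases min_choice z (1 - z) with h | h <;> rw [h]
    exacts [min_le_left _ _, min_le_right _ _]
  have hsin : (2 * min z (1 - z)) ^ 2 ≤ sin (π * z) ^ 2 :=
    pow_le_pow_left₀ (by positivity) (two_mul_min_le_sin_pi_mul hz₀ hz₁) 2
  have hcos : 1 - cos (2 * π * z) = 2 * sin (π * z) ^ 2 := by
    rw [sin_sq_eq_half_sub, mul_assoc]
    ring
  rw [hcos]
  nlinarith

lemma mul_norm_le_two_mul_max {t : ℝ} (ht₀ : 0 ≤ t) (ht₂ : t ≤ 2) (h : Fin 3 → ℝ) :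
    t * ‖h‖ ≤ 2 * max (max |h 0| |h 1|) |h 0 - t * h 2| := by
  set M := max (max |h 0| |h 1|) |h 0 - t * h 2|
  have h₀ : |h 0| ≤ M := (le_max_left _ _).trans (le_max_left _ _)
  have h₁ : |h 1| ≤ M := (le_max_right _ _).trans (le_max_left _ _)
  have h₂ : |h 0 - t * h 2| ≤ M := le_max_right _ _
  rw [← abs_of_nonneg ht₀, ← Real.norm_eq_abs, ← norm_smul,
    pi_norm_le_iff_of_nonneg (by positivity)]
  intro i
  simp only [Pi.smul_apply, smul_eq_mul, Real.norm_eq_abs, abs_mul, abs_of_nonneg ht₀]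
  fin_cases i
  · show t * |h 0| ≤ 2 * M
    nlinarith [abs_nonneg (h 0)]
  · show t * |h 1| ≤ 2 * M
    nlinarith [abs_nonneg (h 1)]
  · show t * |h 2| ≤ 2 * M
    calc t * |h 2| = |h 0 - (h 0 - t * h 2)| := by
          rw [sub_sub_cancel, abs_mul, abs_of_nonneg ht₀]
      _ ≤ |h 0| + |h 0 - t * h 2| := abs_sub _ _
      _ ≤ 2 * M := by linarith

lemma dotProduct_phi13_e₁ (z : ℝ) (h : Fin 3 → ℝ) : phi13 ![0, 1, 1] 0 z ⬝ᵥ h = h 0 := by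
  simp [phi13, gammaH13, gammaW13, dotProduct, Fin.sum_univ_three]

lemma dotProduct_phi13_e₂ (z : ℝ) (h : Fin 3 → ℝ) : phi13 ![1, 0, 1] 1 z ⬝ᵥ h = h 1 := by
  simp [phi13, gammaH13, gammaW13, dotProduct, Fin.sum_univ_three]

lemma dotProduct_phi13_e₁_sub_e₃ (z : ℝ) (h : Fin 3 → ℝ) :
    phi13 ![1, 0, 1] 0 z ⬝ᵥ h = h 0 - (1 - cos (2 * π * z)) * h 2 := by
  simp [phi13, gammaH13, gammaW13, dotProduct, Fin.sum_univ_three]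
  ring

lemma exists_mem_ZL13_max_le_abs_dotProduct (z : ℝ) (h : Fin 3 → ℝ) :
    ∃ p ∈ ZL13, max (max |h 0| |h 1|) |h 0 - (1 - cos (2 * π * z)) * h 2| ≤
      |phi13 p.1 p.2 z ⬝ᵥ h| := by
  rcases max_choice (max |h 0| |h 1|) |h 0 - (1 - cos (2 * π * z)) * h 2| with hM | hM <;>
    rw [hM]
  · rcases max_choice |h 0| |h 1| with hM' | hM' <;> rw [hM']
    · exact ⟨(![0, 1, 1], 0), ⟨by decide, by decide, by decide⟩, by rw [dotProduct_phi13_e₁]⟩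
    · exact ⟨(![1, 0, 1], 1), ⟨by decide, by decide, by decide⟩, by rw [dotProduct_phi13_e₂]⟩
  · exact ⟨(![1, 0, 1], 0), ⟨by decide, by decide, by decide⟩,
      by rw [dotProduct_phi13_e₁_sub_e₃]⟩

/-- Quantitative spanning estimate: there is a constant `c > 0` such
that for all `h ∈ ℝ³` and `z ∈ (0,1)`,
`max_{(k,ℓ) ∈ 𝒵_L} |⟨φ_{(k,ℓ)}(z), h⟩| ≥ c (z² ∧ (1−z)²) |h|`. -/
theorem stmt13 :
    ∃ c : ℝ, 0 < c ∧
      ∀ z ∈ Set.Ioo (0 : ℝ) 1, ∀ h : Fin 3 → ℝ,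
        ∃ p ∈ ZL13, c * min (z ^ 2) ((1 - z) ^ 2) * ‖h‖ ≤ |phi13 p.1 p.2 z ⬝ᵥ h| := by
  refine ⟨4, by norm_num, fun z hz h => ?_⟩
  obtain ⟨p, hp, hM⟩ := exists_mem_ZL13_max_le_abs_dotProduct z h
  refine ⟨p, hp, ?_⟩
  have hm := eight_mul_min_sq_le_one_sub_cos hz.1.le hz.2.le
  have hnorm := mul_norm_le_two_mul_max (t := 1 - cos (2 * π * z))
    (by linarith [cos_le_one (2 * π * z)]) (by linarith [neg_one_le_cos (2 * π * z)]) h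
  nlinarith [norm_nonneg h]
end
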